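/- arXiv:2102.12524 — 2 statements merged into one kernel-verified Lean document; each statement's English description precedes it below -/
import Mathlib

section
/- Let R be a finitely generated subring of a number field k, viewed inside ℂ via a fixed embedding, and let ω ∈ R. Set Z_ω = {m + n·ω : m, n ∈ ℤ} and Q_ω = {m + n·ω : m, n ∈ ℚ}. If y ∈ R \ Q_ω, then there exists a finite ring S and a ring homomorphism ρ : R → S such that ρ(y) ∉ ρ(Z_ω). -/
/-!
Since `y ∉ ℚ + ℚω`, some `ℚ`-linear functional `φ` on `k` kills `1` and `ω` and takes the
value `1` at `y`. Every element of `R` becomes an algebraic integer after multiplication by a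
power of a fixed integer `d`, and `φ` takes values in `D⁻¹ℤ` on algebraic integers, so
`φ(R) ⊆ ℤ[1/(Dd)]`. Take a prime `p ∤ Dd`. If `y - z = p r` with `z ∈ Z_ω` and `r ∈ R`, then
`1 = φ (y - z) = p φ(r)`, which is impossible in `ℤ[1/(Dd)]`. The ring `R/pR` is a finitely
generated `ℤ`-algebra of characteristic `p` in which `d` is invertible, so it is integral over
`ℤ`, hence finite.
-/

open IsLocalization

section IntegralAway

variable (R : Type*) {A B : Type*} [CommRing R] [CommRing A] [CommRing B] [Algebra R A]
  [Algebra R B]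

def integralAway (c : R) : Subalgebra R A where
  carrier := {x | ∃ n : ℕ, IsIntegral R (algebraMap R A c ^ n * x)}
  algebraMap_mem' r := ⟨0, by simpa using isIntegral_algebraMap⟩
  add_mem' := by
    rintro a b ⟨m, ha⟩ ⟨n, hb⟩
    refine ⟨m + n, ?_⟩
    have hc := (isIntegral_algebraMap (R := R) (A := A) (x := c))
    convert ((hc.pow n).mul ha).add ((hc.pow m).mul hb) using 1
    ring
  mul_mem' := by
    rintro a b ⟨m, ha⟩ ⟨n, hb⟩
    exact ⟨m + n, by convert ha.mul hb using 1; ring⟩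

variable {R}

theorem map_mem_integralAway (f : A →ₐ[R] B) {c : R} {x : A} (hx : x ∈ integralAway R c) :
    f x ∈ integralAway R c := by
  obtain ⟨n, hn⟩ := hx
  exact ⟨n, by simpa using hn.map f⟩

theorem algHom_mem_integralAway_iff (f : A →ₐ[R] B) (hf : Function.Injective f) {c : R}
    {x : A} : f x ∈ integralAway R c ↔ x ∈ integralAway R c := by
  refine exists_congr fun n ↦ ?_
  rw [← isIntegral_algHom_iff f hf, map_mul, map_pow, AlgHom.commutes]

theorem isIntegral_of_mem_integralAway {c v : R} (hcv : algebraMap R A (v * c) = 1) {x : A}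
    (hx : x ∈ integralAway R c) : IsIntegral R x := by
  obtain ⟨n, hn⟩ := hx
  refine IsIntegral.of_mul_unit (r := v ^ n) (y := algebraMap R A c ^ n) ?_ (by rwa [mul_comm])
  rw [← map_pow, ← map_mul, ← mul_pow, map_pow, hcv, one_pow]

theorem exists_ne_zero_adjoin_le_integralAway [NoZeroDivisors R] [Algebra.IsAlgebraic R A]
    (s : Finset A) : ∃ c ≠ (0 : R), Algebra.adjoin R (s : Set A) ≤ integralAway R c := by
  obtain ⟨c, hc, hs⟩ := Algebra.IsAlgebraic.exists_integral_multiples R s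
  refine ⟨c, hc, Algebra.adjoin_le fun x hx ↦ ⟨1, ?_⟩⟩
  simpa [Algebra.smul_def] using hs x hx

end IntegralAway

theorem Module.Dual.exists_forall_mem_eq_zero_and_eq_one {K V : Type*} [Field K] [AddCommGroup V]
    [Module K V] {W : Submodule K V} {y : V} (hy : y ∉ W) :
    ∃ φ : Module.Dual K V, (∀ w ∈ W, φ w = 0) ∧ φ y = 1 := by
  obtain ⟨φ, hφy, hφW⟩ := W.exists_dual_map_eq_bot_of_notMem hy inferInstance
  refine ⟨(φ y)⁻¹ • φ, fun w hw ↦ ?_, inv_mul_cancel₀ hφy⟩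
  have : φ w ∈ W.map φ := Submodule.mem_map_of_mem hw
  simp_all

theorem Int.exists_prime_not_dvd {c : ℤ} (hc : c ≠ 0) : ∃ p : ℕ, p.Prime ∧ ¬ (p : ℤ) ∣ c := by
  obtain ⟨p, hcp, hp⟩ := Nat.exists_infinite_primes (c.natAbs + 1)
  refine ⟨p, hp, fun hpc ↦ ?_⟩
  have := Nat.le_of_dvd (Int.natAbs_pos.mpr hc) (Int.natCast_dvd.mp hpc)
  omega

theorem finite_of_isIntegral_of_natCast_eq_zero {B : Type*} [CommRing B] [Algebra ℤ B]
    [Algebra.FiniteType ℤ B] [Algebra.IsIntegral ℤ B] {n : ℕ} (hn : n ≠ 0) (h : (n : B) = 0) :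
    Finite B := by
  -- the `ℤ`-module structure that `Algebra.IsIntegral.finite` speaks about
  let : Module ℤ B := Algebra.toModule
  have : Module.Finite ℤ B := Algebra.IsIntegral.finite
  refine Module.finite_of_fg_torsion B fun b ↦ ⟨⟨n, ?_⟩, ?_⟩
  · simpa [mem_nonZeroDivisors_iff_ne_zero] using hn
  · simp [Submonoid.smul_def, Algebra.smul_def, h]

theorem finite_quotient_span_natCast {A : Type*} [CommRing A] [Algebra.FiniteType ℤ A] {d : ℤ}
    (hA : ∀ a : A, a ∈ integralAway ℤ d) {p : ℕ} (hp : p.Prime) (hpd : ¬ (p : ℤ) ∣ d) :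
    Finite (A ⧸ Ideal.span {(p : A)}) := by
  set I := Ideal.span {(p : A)}
  have hp0 : (p : A ⧸ I) = 0 := by
    rw [← map_natCast (Ideal.Quotient.mk I), Ideal.Quotient.eq_zero_iff_mem]
    exact Ideal.mem_span_singleton_self _
  obtain ⟨u, v, huv⟩ :=
    (Irreducible.coprime_iff_not_dvd (Nat.prime_iff_prime_int.mp hp).irreducible).mpr hpd
  have hvd : algebraMap ℤ (A ⧸ I) (v * d) = 1 := by
    rw [← map_one (algebraMap ℤ (A ⧸ I)), ← huv, map_add, map_mul _ u, map_natCast, hp0, mul_zero,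
      zero_add]
  have : Algebra.IsIntegral ℤ (A ⧸ I) := ⟨fun x ↦ by
    obtain ⟨a, rfl⟩ := Ideal.Quotient.mkₐ_surjective ℤ I x
    exact isIntegral_of_mem_integralAway hvd (map_mem_integralAway _ (hA a))⟩
  have : Algebra.FiniteType ℤ (A ⧸ I) :=
    .of_surjective (Ideal.Quotient.mkₐ ℤ I) (Ideal.Quotient.mkₐ_surjective ℤ I)
  exact finite_of_isIntegral_of_natCast_eq_zero hp.ne_zero hp0

theorem Subring.finiteType_closure_finset {A : Type*} [Ring A] (s : Finset A) :
    Algebra.FiniteType ℤ (Subring.closure (s : Set A)) :=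
  ((Subalgebra.fg_iff_finiteType _).mp (Subalgebra.fg_adjoin_finset s)).equiv
    (Subring.closureEquivAdjoinInt _).symm

theorem Ideal.Quotient.mk_span_natCast_ne_mk {A : Type*} [CommRing A] (φ : A →+ ℚ) {p : ℕ}
    (hp : ∀ r, (p : ℚ) * φ r ≠ 1) {y z : A} (hyz : φ y - φ z = 1) :
    Ideal.Quotient.mk (Ideal.span {(p : A)}) y ≠ Ideal.Quotient.mk _ z := by
  intro h
  obtain ⟨r, hr⟩ := Ideal.mem_span_singleton'.mp (Ideal.Quotient.eq.mp h)
  apply hp r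
  rw [← hyz, ← map_sub, ← hr, mul_comm r, ← nsmul_eq_mul p r, map_nsmul, nsmul_eq_mul]

theorem exists_ne_zero_isInteger_smul_of_isIntegral {k : Type*} [Field k] [NumberField k]
    (φ : k →+ ℚ) : ∃ D ≠ (0 : ℤ), ∀ x : k, IsIntegral ℤ x → IsInteger ℤ (D • φ x) := by
  let ψ := φ.toIntLinearMap ∘ₗ (algebraMap (NumberField.RingOfIntegers k) k).toIntAlgHom.toLinearMap
  have hfg : (LinearMap.range ψ).FG := by
    rw [LinearMap.range_eq_map]
    exact Module.Finite.fg_top.map ψ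
  obtain ⟨D, hD, hψ⟩ := FractionalIdeal.isFractional_of_fg (S := nonZeroDivisors ℤ) hfg
  exact ⟨D, nonZeroDivisors.ne_zero hD, fun x hx ↦ hψ _ ⟨⟨x, hx⟩, rfl⟩⟩

theorem natCast_mul_ne_one_of_mem_integralAway {A : Type*} [CommRing A] (φ : A →+ ℚ) {p : ℕ}
    (hp : p.Prime) {D d : ℤ} (hpDd : ¬ (p : ℤ) ∣ D * d)
    (hD : ∀ x : A, IsIntegral ℤ x → IsInteger ℤ (D • φ x)) {r : A}
    (hr : r ∈ integralAway ℤ d) : (p : ℚ) * φ r ≠ 1 := by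
  obtain ⟨n, hn⟩ := hr
  obtain ⟨m, hm⟩ := hD _ hn
  intro hpr
  have hDd : D * d ^ n = p * m := by
    have hφ : φ ((d : A) ^ n * r) = d ^ n * φ r := by
      rw [← Int.cast_pow, ← zsmul_eq_mul, map_zsmul, zsmul_eq_mul, Int.cast_pow]
    have hm' : (m : ℚ) = D * (d ^ n * φ r) := by simpa [hφ] using hm
    have : (D * d ^ n : ℚ) = p * m := by
      rw [hm', ← mul_one ((D : ℚ) * d ^ n), ← hpr]
      ring
    exact_mod_cast this
  have hp' : Prime (p : ℤ) := Nat.prime_iff_prime_int.mp hp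
  rcases hp'.dvd_mul.mp ⟨m, hDd⟩ with hpD | hpd
  · exact hpDd (hpD.mul_right d)
  · exact hpDd ((hp'.dvd_of_dvd_pow hpd).mul_left D)

theorem separate_from_Z_omega_general {k : Type*} [Field k] [NumberField k]
    (R : Subring k) (hfg : ∃ s : Finset k, Subring.closure (s : Set k) = R)
    (ω : k) (y : k) (hy : y ∈ R)
    (hyQ : y ∉ {x : k | ∃ m n : ℚ, x = (m : k) + (n : k) * ω}) :
    ∃ (S : Type) (_ : CommRing S) (_ : Finite S) (ρ : R →+* S),
      ρ ⟨y, hy⟩ ∉ ρ '' {z : R | ∃ m n : ℤ, (z : k) = (m : k) + (n : k) * ω} := by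
  obtain ⟨s, rfl⟩ := hfg
  have hyW : y ∉ Submodule.span ℚ {1, ω} := fun h ↦ hyQ <| by
    obtain ⟨a, b, hab⟩ := Submodule.mem_span_pair.mp h
    exact ⟨a, b, by simp [← hab, Rat.smul_def]⟩
  obtain ⟨φ, hφW, hφy⟩ := Module.Dual.exists_forall_mem_eq_zero_and_eq_one hyW
  have := IsLocalization.isAlgebraic ℚ (nonZeroDivisors ℤ)
  have := Algebra.IsAlgebraic.trans ℤ ℚ k
  obtain ⟨d, hd, hsd⟩ := exists_ne_zero_adjoin_le_integralAway (R := ℤ) s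
  rw [Algebra.adjoin_int] at hsd
  obtain ⟨D, hD, hφD⟩ := exists_ne_zero_isInteger_smul_of_isIntegral φ.toAddMonoidHom
  obtain ⟨p, hp, hpDd⟩ := Int.exists_prime_not_dvd (mul_ne_zero hD hd)
  set R := Subring.closure (s : Set k)
  set I := Ideal.span {(p : R)}
  have hsep : ∀ z ∈ {z : R | ∃ m n : ℤ, (z : k) = (m : k) + (n : k) * ω},
      Ideal.Quotient.mk I z ≠ Ideal.Quotient.mk I ⟨y, hy⟩ := by
    rintro z ⟨m, n, hz⟩
    have hφz : φ z = 0 := hφW z (Submodule.mem_span_pair.mpr ⟨m, n, by simp [hz, Rat.smul_def]⟩)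
    have hpφ : ∀ r : R, (p : ℚ) * φ r ≠ 1 := fun r ↦
      natCast_mul_ne_one_of_mem_integralAway φ.toAddMonoidHom hp hpDd hφD (hsd r.2)
    refine (Ideal.Quotient.mk_span_natCast_ne_mk
      (φ.toAddMonoidHom.comp R.subtype.toAddMonoidHom) hpφ ?_).symm
    simp [hφy, hφz]
  have : Algebra.FiniteType ℤ R := Subring.finiteType_closure_finset s
  have : Finite (R ⧸ I) := finite_quotient_span_natCast
    (fun a ↦ (algHom_mem_integralAway_iff R.subtype.toIntAlgHom Subtype.val_injective).mp (hsd a.2))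
    hp fun hpd ↦ hpDd (hpd.mul_left D)
  refine ⟨Shrink (R ⧸ I), inferInstance, .of_equiv _ (equivShrink _),
    (Shrink.ringEquiv _).symm.toRingHom.comp (Ideal.Quotient.mk I), ?_⟩
  rintro ⟨z, hz, hzy⟩
  exact hsep z hz (by simpa using hzy)

/-- Hamilton–Wilton–Zalesskii: if `R` is a finitely generated subring of a number
field `k` (embedded in `ℂ`), `ω ∈ R`, and `y ∈ R` is not a `ℚ`-linear combination
of `1` and `ω`, then some finite ring quotient of `R` separates `y` from
`Z_ω = {m + nω : m, n ∈ ℤ}`. -/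
theorem separate_from_Z_omega {k : Type*} [Field k] [NumberField k] (f : k →+* ℂ)
    (R : Subring k) (hfg : ∃ s : Finset k, Subring.closure (s : Set k) = R)
    (ω : k) (hω : ω ∈ R) (y : k) (hy : y ∈ R)
    (hyQ : y ∉ {x : k | ∃ m n : ℚ, x = (m : k) + (n : k) * ω}) :
    ∃ (S : Type) (_ : CommRing S) (_ : Finite S) (ρ : R →+* S),
      ρ ⟨y, hy⟩ ∉ ρ '' {z : R | ∃ m n : ℤ, (z : k) = (m : k) + (n : k) * ω} :=
  separate_from_Z_omega_general R hfg ω y hy hyQ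
end

section
/- Consider a Euclidean triangle inscribed in a parallelogram: the parallelogram has vertices 0, v, w, v + w in ℂ (with v, w linearly independent over ℝ), divided by the diagonal from v to w into triangles T₁ = {0, v, w} and T₂ = {v, w, v+w}. If the triangle T₁ has an obtuse angle, then the circumscribed circle of T₁ contains the fourth vertex v + w or the corresponding reflected vertex in its interior; in particular, if the circumcircle of the triangle {0, v, w} contains neither v + w nor any lattice point of ℤv + ℤw other than its vertices in its open disc (the Delaunay condition), then the triangle {0, v, w} is acute or right. -/
/-!
If `a`, `b`, `c` lie on a circle of radius `R` about `z`, the fourth vertex `b + c - a` of the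
parallelogram spanned at `a` satisfies `‖b + c - a - z‖² = R² + 2 ⟪b - a, c - a⟫`. So an obtuse
angle at `a` puts `b + c - a` inside the open circumdisc; for the triangle `{0, v, w}` this point
is one of the lattice points `v + w`, `w - v`, `v - w`.
-/

section InnerProductSpace

variable {E : Type*} [NormedAddCommGroup E] [InnerProductSpace ℝ E]

open scoped RealInnerProductSpace

theorem norm_add_sub_sub_sq_of_norm_sub_eq {a b c z : E} {R : ℝ}
    (ha : ‖a - z‖ = R) (hb : ‖b - z‖ = R) (hc : ‖c - z‖ = R) :
    ‖b + c - a - z‖ ^ 2 = R ^ 2 + 2 * ⟪b - a, c - a⟫ := by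
  have hab : ‖b - z‖ ^ 2 = ‖b - a‖ ^ 2 + 2 * ⟪b - a, a - z⟫ + ‖a - z‖ ^ 2 := by
    rw [← norm_add_sq_real]; congr 2; abel
  calc ‖b + c - a - z‖ ^ 2 = ‖(b - a) + ((c - a) + (a - z))‖ ^ 2 := by congr 2; abel
    _ = ‖b - a‖ ^ 2 + 2 * (⟪b - a, c - a⟫ + ⟪b - a, a - z⟫) + ‖c - z‖ ^ 2 := by
      rw [norm_add_sq_real, inner_add_right]; congr 3; abel
    _ = R ^ 2 + 2 * ⟪b - a, c - a⟫ := by rw [hb, ha] at hab; rw [hc]; linarith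

theorem real_inner_nonneg_of_norm_sub_eq_of_le_norm {a b c z : E} {R : ℝ}
    (ha : ‖a - z‖ = R) (hb : ‖b - z‖ = R) (hc : ‖c - z‖ = R)
    (hout : R ≤ ‖b + c - a - z‖) :
    0 ≤ ⟪b - a, c - a⟫ := by
  have hR : 0 ≤ R := ha ▸ norm_nonneg _
  have hsq : R ^ 2 ≤ ‖b + c - a - z‖ ^ 2 := pow_le_pow_left₀ hR hout 2
  rw [norm_add_sub_sub_sq_of_norm_sub_eq ha hb hc] at hsq
  linarith

end InnerProductSpace

theorem delaunay_triangle_nonobtuse_general (v w : ℂ)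
    (z : ℂ) (R : ℝ)
    (h0 : ‖0 - z‖ = R) (hv : ‖v - z‖ = R)
    (hw : ‖w - z‖ = R)
    (hdel : ∀ p : ℂ, (∃ m n : ℤ, p = (m : ℂ) * v + (n : ℂ) * w) →
      ¬ ‖p - z‖ < R) :
    0 ≤ ((v - 0) * (starRingEnd ℂ) (w - 0)).re ∧
      0 ≤ ((0 - v) * (starRingEnd ℂ) (w - v)).re ∧
      0 ≤ ((0 - w) * (starRingEnd ℂ) (v - w)).re := by
  have angle_nonneg : ∀ {a b c : ℂ}, ‖a - z‖ = R → ‖b - z‖ = R → ‖c - z‖ = R →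
      (∃ m n : ℤ, b + c - a = (m : ℂ) * v + (n : ℂ) * w) →
      0 ≤ ((b - a) * (starRingEnd ℂ) (c - a)).re := fun ha hb hc hlat => by
    rw [← Complex.inner, real_inner_comm]
    exact real_inner_nonneg_of_norm_sub_eq_of_le_norm ha hb hc (not_lt.mp (hdel _ hlat))
  exact ⟨angle_nonneg h0 hv hw ⟨1, 1, by push_cast; ring⟩,
    angle_nonneg hv h0 hw ⟨-1, 1, by push_cast; ring⟩,
    angle_nonneg hw h0 hv ⟨1, -1, by push_cast; ring⟩⟩

/-- Delaunay condition implies non-obtuseness: if the open circumdisc of the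
triangle `{0, v, w}` (circumcenter `z`, circumradius `R`) contains no point of
the lattice `ℤv + ℤw`, then all angles of the triangle are at most `π/2`
(each angle is ≤ π/2 iff the real inner product of the adjacent sides,
`re ((b - a) * conj (c - a))`, is nonnegative). -/
theorem delaunay_triangle_nonobtuse (v w : ℂ) (hind : LinearIndependent ℝ ![v, w])
    (z : ℂ) (R : ℝ)
    (h0 : ‖0 - z‖ = R) (hv : ‖v - z‖ = R)
    (hw : ‖w - z‖ = R)
    (hdel : ∀ p : ℂ, (∃ m n : ℤ, p = (m : ℂ) * v + (n : ℂ) * w) →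
      ¬ ‖p - z‖ < R) :
    0 ≤ ((v - 0) * (starRingEnd ℂ) (w - 0)).re ∧
      0 ≤ ((0 - v) * (starRingEnd ℂ) (w - v)).re ∧
      0 ≤ ((0 - w) * (starRingEnd ℂ) (v - w)).re :=
  delaunay_triangle_nonobtuse_general v w z R h0 hv hw hdel
end
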